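/- arXiv:1302.7198 — 2 statements merged into one kernel-verified Lean document; each statement's English description precedes it below -/
import Mathlib

section
/- Let R be a δ-simple δ-ring (a commutative ring containing ℚ with a derivation δ whose only δ-stable ideals are (0) and R), let k := R^δ (which is a field), and let S be a k-algebra, regarded as a δ-ring with δ = 0; equip R ⊗_k S with the derivation δ(r ⊗ s) = δ(r) ⊗ s. Then (R ⊗_k S)^δ = 1 ⊗ S, and the assignments 𝔞 ↦ R ⊗_k 𝔞 and 𝔟 ↦ S ∩ 𝔟 (identifying S with 1 ⊗ S) are mutually inverse bijections between the set of ideals of S and the set of δ-ideals of R ⊗_k S. In particular, every δ-ideal 𝔟 of R ⊗_k S is generated as an ideal by 𝔟 ∩ (1 ⊗ S). -/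
open scoped TensorProduct

universe u

/-- A δσ-ring: a commutative ring `R` with a derivation `δ` and a ring endomorphism `σ`
satisfying `δ (σ r) = ℏ • σ (δ r)` for a fixed δ-constant unit `ℏ`. -/
structure DSRing (R : Type u) [CommRing R] where
  δ : R → R
  σ : R →+* R
  hbar : Rˣ
  δ_add : ∀ a b : R, δ (a + b) = δ a + δ b
  δ_mul : ∀ a b : R, δ (a * b) = a * δ b + δ a * b
  δ_hbar : δ (hbar : R) = 0
  δσ_comm : ∀ r : R, δ (σ r) = (hbar : R) * σ (δ r)

namespace DSRing

variable {R : Type u} [CommRing R]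

/-- `I` is a δ-ideal, i.e. stable under the derivation. -/
def IsDeltaIdeal (D : DSRing R) (I : Ideal R) : Prop :=
  ∀ a ∈ I, D.δ a ∈ I

/-- `R` is δ-simple: its only δ-ideals are `(0)` and `R`. -/
def DeltaSimple (D : DSRing R) : Prop :=
  ∀ I : Ideal R, D.IsDeltaIdeal I → I = ⊥ ∨ I = ⊤

/-- The δσ-structure `DR` on `R` extends the δσ-structure `DK` on `K`. -/
def Extends {K : Type u} [CommRing K] [Algebra K R] (DR : DSRing R) (DK : DSRing K) : Prop :=
  (∀ a : K, DR.δ (algebraMap K R a) = algebraMap K R (DK.δ a)) ∧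
  (∀ a : K, DR.σ (algebraMap K R a) = algebraMap K R (DK.σ a)) ∧
  ((DR.hbar : R) = algebraMap K R ((DK.hbar : K)))

end DSRing

/-- The set of all entries of the matrices `σ^i(Y)`, `i ≥ 0`. -/
def sigmaOrbitEntries {R : Type u} [CommRing R] (σ : R →+* R) {ι : Type}
    (Y : Matrix ι ι R) : Set R :=
  {x | ∃ (i : ℕ) (j l : ι), x = (⇑σ)^[i] (Y j l)}

/-- The set of all inverses of the elements `σ^i(det Y)`, `i ≥ 0`. -/
def sigmaDetInvs {R : Type u} [CommRing R] (σ : R →+* R) {ι : Type} [Fintype ι]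
    [DecidableEq ι] (Y : Matrix ι ι R) : Set R :=
  {x | ∃ i : ℕ, x * (⇑σ)^[i] Y.det = 1}

/-- `K⟨Y⟩_σ` : the subfield of `L` generated over (the image of) `K` by all entries of
all matrices `σ^i(Y)`, `i ≥ 0`. -/
def sigmaGenField (K : Type u) {L : Type u} [Field K] [Field L] [Algebra K L]
    (σ : L →+* L) {ι : Type} (Y : Matrix ι ι L) : Subfield L :=
  Subfield.closure (Set.range (algebraMap K L) ∪ sigmaOrbitEntries σ Y)

/-- `K{Y, 1/det Y}_σ` : the `K`-subalgebra generated by the entries of the matrices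
`σ^i(Y)` and the inverses of the elements `σ^i(det Y)`, `i ≥ 0`. -/
def sigmaPVAlgebra (K : Type u) {R : Type u} [CommRing K] [CommRing R] [Algebra K R]
    (σ : R →+* R) {ι : Type} [Fintype ι] [DecidableEq ι] (Y : Matrix ι ι R) :
    Subalgebra K R :=
  Algebra.adjoin K (sigmaOrbitEntries σ Y ∪ sigmaDetInvs σ Y)

/-- `Y` is a fundamental solution matrix for `δ(y) = A y` : it is invertible and
satisfies `δ(Y) = A Y` entrywise. -/
def IsFundamental {K R : Type u} [CommRing K] [CommRing R] [Algebra K R] {ι : Type}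
    [Fintype ι] [DecidableEq ι] (δ : R → R) (A : Matrix ι ι K) (Y : Matrix ι ι R) : Prop :=
  IsUnit Y.det ∧ ∀ i j, δ (Y i j) = ∑ l, algebraMap K R (A i l) * Y l j

/-- `L|K` is a σ-Picard-Vessiot extension for `δ(y) = A y` with fundamental solution
matrix `Y`. -/
def IsPVExtensionWith {K L : Type u} [Field K] [Field L] [Algebra K L]
    (DK : DSRing K) (DL : DSRing L) {ι : Type} [Fintype ι] [DecidableEq ι]
    (A : Matrix ι ι K) (Y : Matrix ι ι L) : Prop :=
  DL.Extends DK ∧ IsFundamental DL.δ A Y ∧ sigmaGenField K DL.σ Y = ⊤ ∧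
    ∀ x : L, DL.δ x = 0 → ∃ a : K, DK.δ a = 0 ∧ algebraMap K L a = x

/-- `L|K` is a σ-Picard-Vessiot extension for `δ(y) = A y`. -/
def IsPVExtension {K L : Type u} [Field K] [Field L] [Algebra K L]
    (DK : DSRing K) (DL : DSRing L) {ι : Type} [Fintype ι] [DecidableEq ι]
    (A : Matrix ι ι K) : Prop :=
  ∃ Y : Matrix ι ι L, IsPVExtensionWith DK DL A Y

/-- `R` is a σ-Picard-Vessiot ring over `K` for `δ(y) = A y` with fundamental solution
matrix `Y`. -/
def IsPVRingWith {K R : Type u} [Field K] [CommRing R] [Algebra K R]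
    (DK : DSRing K) (DR : DSRing R) {ι : Type} [Fintype ι] [DecidableEq ι]
    (A : Matrix ι ι K) (Y : Matrix ι ι R) : Prop :=
  DR.Extends DK ∧ IsFundamental DR.δ A Y ∧ sigmaPVAlgebra K DR.σ Y = ⊤ ∧ DR.DeltaSimple

/-- `R` is a σ-Picard-Vessiot ring over `K` for `δ(y) = A y`. -/
def IsPVRing {K R : Type u} [Field K] [CommRing R] [Algebra K R]
    (DK : DSRing K) (DR : DSRing R) {ι : Type} [Fintype ι] [DecidableEq ι]
    (A : Matrix ι ι K) : Prop :=
  ∃ Y : Matrix ι ι R, IsPVRingWith DK DR A Y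

/-- δ-simplicity of a subalgebra `S` of `L`: every ideal of `S` stable under the
derivation (whenever the derivative of an element of `S` lies again in `S`) is trivial. -/
def DeltaSimpleSubalgebra {K L : Type u} [CommRing K] [CommRing L] [Algebra K L]
    (δ : L → L) (S : Subalgebra K L) : Prop :=
  ∀ I : Ideal S,
    (∀ a : S, a ∈ I → ∀ h : δ (a : L) ∈ S, (⟨δ (a : L), h⟩ : S) ∈ I) → I = ⊥ ∨ I = ⊤

/-- A σ-field `(k, σk)` is σ-closed: every finitely σ-generated `k`-σ-algebra which is a
σ-domain admits a `k`-σ-algebra morphism to `k`. -/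
def IsSigmaClosed {k : Type u} [Field k] (σk : k →+* k) : Prop :=
  ∀ (R : Type u) [CommRing R] [Algebra k R] (σR : R →+* R),
    (∀ a : k, σR (algebraMap k R a) = algebraMap k R (σk a)) →
    (∃ s : Finset R, Algebra.adjoin k {x | ∃ i : ℕ, ∃ b ∈ s, x = (⇑σR)^[i] b} = ⊤) →
    IsDomain R → Function.Injective ⇑σR →
    ∃ φ : R →ₐ[k] k, ∀ r, φ (σR r) = σk (φ r)

/-- A σ-ring `(A, σA)` is perfectly σ-reduced: whenever a product of σ-iterates of `f`
vanishes, `f = 0`. -/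
def PerfectlySigmaReduced (A : Type u) [CommRing A] (σA : A → A) : Prop :=
  ∀ (f : A) (m : ℕ) (α : Fin (m + 1) → ℕ), (∏ i, σA^[α i] f) = 0 → f = 0

section SigmaBase

variable (k : Type u) [Field k] (σk : k →+* k)
variable (A : Type u) [CommRing A] [Algebra k A] (σA : A →+* A)

/-- `A` is σ-separable over `k` : for every σ-field extension `k'` of `k`, the
endomorphism `σA ⊗ σ'` of `A ⊗[k] k'` is injective. -/
def SigmaSeparable : Prop :=
  ∀ (k' : Type u) [Field k'] [Algebra k k'] (σ' : k' →+* k'),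
    (∀ c : k, σ' (algebraMap k k' c) = algebraMap k k' (σk c)) →
    ∀ τ : (A ⊗[k] k') →+* (A ⊗[k] k'),
      (∀ (a : A) (c : k'), τ (a ⊗ₜ c) = σA a ⊗ₜ σ' c) →
      Function.Injective ⇑τ

/-- `A` is perfectly σ-separable over `k` : for every σ-field extension `k'` of `k`,
the σ-ring `A ⊗[k] k'` is perfectly σ-reduced. -/
def SigmaPerfSeparable : Prop :=
  ∀ (k' : Type u) [Field k'] [Algebra k k'] (σ' : k' →+* k'),
    (∀ c : k, σ' (algebraMap k k' c) = algebraMap k k' (σk c)) →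
    ∀ τ : (A ⊗[k] k') →+* (A ⊗[k] k'),
      (∀ (a : A) (c : k'), τ (a ⊗ₜ c) = σA a ⊗ₜ σ' c) →
      PerfectlySigmaReduced (A ⊗[k] k') ⇑τ

/-- `A` is σ-regular over `k` : for every σ-field extension `k'` of `k`, the σ-ring
`A ⊗[k] k'` is a σ-domain. -/
def SigmaRegular : Prop :=
  ∀ (k' : Type u) [Field k'] [Algebra k k'] (σ' : k' →+* k'),
    (∀ c : k, σ' (algebraMap k k' c) = algebraMap k k' (σk c)) →
    ∀ τ : (A ⊗[k] k') →+* (A ⊗[k] k'),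
      (∀ (a : A) (c : k'), τ (a ⊗ₜ c) = σA a ⊗ₜ σ' c) →
      IsDomain (A ⊗[k] k') ∧ Function.Injective ⇑τ

end SigmaBase

/-- The Krull dimension of a commutative ring, as a natural number
(with junk value `0` in the infinite cases). -/
noncomputable def krullDimNat (A : Type*) [CommRing A] : ℕ :=
  ENat.toNat ((ringKrullDim A).unbotD 0)

/-- The σ-transcendence degree of `L` over `K` : the supremum of the sizes of finite
families of elements of `L` which are σ-algebraically independent over `K`. -/
noncomputable def sigmaTrdeg (K L : Type u) [Field K] [Field L] [Algebra K L]
    (σL : L →+* L) : ℕ∞ :=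
  sSup {n : ℕ∞ | ∃ r : ℕ, n = r ∧ ∃ x : Fin r → L,
    AlgebraicIndependent K fun p : ℕ × Fin r => (⇑σL)^[p.1] (x p.2)}

/-- A δ-ring: a commutative ring with a derivation. -/
structure DRing (R : Type u) [CommRing R] where
  δ : R → R
  δ_add : ∀ a b : R, δ (a + b) = δ a + δ b
  δ_mul : ∀ a b : R, δ (a * b) = a * δ b + δ a * b

set_option maxHeartbeats 1000000 in
/-- for a δ-simple δ-ring `R` with constants `k` and a `k`-algebra `S`
(with zero derivation), `(R ⊗_k S)^δ = 1 ⊗ S`, and extension/contraction along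
`S → R ⊗_k S` are mutually inverse bijections between ideals of `S` and δ-ideals of
`R ⊗_k S`. Here `k` is (a ring isomorphic to) `R^δ`, via the embedding `k → R`. -/
theorem stmt_8 {R : Type u} [CommRing R] [Algebra ℚ R] (D : DRing R)
    (hsimple : ∀ I : Ideal R, (∀ a ∈ I, D.δ a ∈ I) → I = ⊥ ∨ I = ⊤)
    (k : Type u) [CommRing k] [Algebra k R]
    (hkinj : Function.Injective (algebraMap k R))
    (hkrange : ∀ r : R, (∃ c : k, algebraMap k R c = r) ↔ D.δ r = 0)
    (S : Type u) [CommRing S] [Algebra k S]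
    (ι : S →+* R ⊗[k] S) (hι : ∀ s : S, ι s = 1 ⊗ₜ[k] s)
    (δT : R ⊗[k] S → R ⊗[k] S)
    (hadd : ∀ x y, δT (x + y) = δT x + δT y)
    (hpure : ∀ (r : R) (s : S), δT (r ⊗ₜ[k] s) = D.δ r ⊗ₜ[k] s) :
    (∀ t : R ⊗[k] S, δT t = 0 ↔ t ∈ Set.range ⇑ι) ∧
    (∀ 𝔞 : Ideal S, Ideal.comap ι (Ideal.map ι 𝔞) = 𝔞) ∧
    (∀ 𝔞 : Ideal S, ∀ t ∈ Ideal.map ι 𝔞, δT t ∈ Ideal.map ι 𝔞) ∧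
    (∀ 𝔟 : Ideal (R ⊗[k] S), (∀ t ∈ 𝔟, δT t ∈ 𝔟) →
      Ideal.map ι (Ideal.comap ι 𝔟) = 𝔟) := by
  classical
  -- basic facts about δ
  have hδ0 : D.δ 0 = 0 := by
    have h := D.δ_add 0 0
    rw [add_zero] at h
    exact (left_eq_add.mp h)
  have hδ1 : D.δ 1 = 0 := by
    have h := D.δ_mul 1 1
    simp only [mul_one, one_mul] at h
    exact (left_eq_add.mp h)
  have hδT0 : δT 0 = 0 := by
    have h := hadd 0 0
    rw [add_zero] at h
    exact (left_eq_add.mp h)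
  have hconst : ∀ c : k, D.δ (algebraMap k R c) = 0 := fun c =>
    (hkrange _).mp ⟨c, rfl⟩
  have hδsmulk : ∀ (c : k) (r : R), D.δ (c • r) = c • D.δ r := by
    intro c r
    rw [Algebra.smul_def, Algebra.smul_def, D.δ_mul, hconst, zero_mul, add_zero]
  rcases subsingleton_or_nontrivial R with hR | hR
  · -- trivial case
    have hks : Subsingleton k := ⟨fun a b => hkinj (Subsingleton.elim _ _)⟩
    have h01S : (1 : S) = 0 := by
      rw [← map_one (algebraMap k S), Subsingleton.elim (1 : k) 0, map_zero]
    have hSs : Subsingleton S := subsingleton_of_zero_eq_one h01S.symm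
    have h01T : (1 : R ⊗[k] S) = 0 := by
      rw [Algebra.TensorProduct.one_def, h01S, TensorProduct.tmul_zero]
    have hTs : Subsingleton (R ⊗[k] S) := subsingleton_of_zero_eq_one h01T.symm
    have hmemS : ∀ (J : Ideal S) (x : S), x ∈ J := fun J x => by
      rw [Subsingleton.elim x (0 : S)]; exact J.zero_mem
    have hmemT : ∀ (J : Ideal (R ⊗[k] S)) (x : R ⊗[k] S), x ∈ J := fun J x => by
      rw [Subsingleton.elim x (0 : R ⊗[k] S)]; exact J.zero_mem
    refine ⟨fun t => ⟨fun _ => ⟨0, Subsingleton.elim _ _⟩,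
        fun _ => Subsingleton.elim _ _⟩, fun 𝔞 => ?_, fun 𝔞 t _ => hmemT _ _,
        fun 𝔟 _ => ?_⟩
    · ext x
      exact ⟨fun _ => hmemS _ _, fun _ => hmemS _ _⟩
    · ext x; exact ⟨fun _ => hmemT _ _, fun _ => hmemT _ _⟩
  -- nontrivial case: k is a field
  have hunit : ∀ r : R, r ≠ 0 → D.δ r = 0 → IsUnit r := by
    intro r hr hdr
    have hstab : ∀ a ∈ Ideal.span {r}, D.δ a ∈ Ideal.span {r} := by
      intro a ha
      obtain ⟨x, hx⟩ := Ideal.mem_span_singleton'.mp ha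
      rw [← hx, D.δ_mul, hdr, mul_zero, zero_add]
      exact Ideal.mem_span_singleton'.mpr ⟨D.δ x, rfl⟩
    rcases hsimple _ hstab with h | h
    · exact absurd (Ideal.span_singleton_eq_bot.mp h) hr
    · exact Ideal.span_singleton_eq_top.mp h
  have hδinv : ∀ x y : R, D.δ x = 0 → x * y = 1 → D.δ y = 0 := by
    intro x y hx hxy
    have h := D.δ_mul x y
    rw [hxy, hδ1, hx, zero_mul, add_zero] at h
    have hxu : IsUnit x := IsUnit.of_mul_eq_one y hxy
    obtain ⟨u, hu⟩ := hxu
    have := congrArg (fun z => (↑u⁻¹ : R) * z) h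
    simpa [← hu, ← mul_assoc] using this.symm
  have hfield : IsField k := by
    refine ⟨⟨0, 1, fun h => ?_⟩, mul_comm, ?_⟩
    · apply (one_ne_zero : (1 : R) ≠ 0)
      rw [← map_one (algebraMap k R), ← h, map_zero]
    · intro a ha
      have hx0 : algebraMap k R a ≠ 0 := fun h =>
        ha (hkinj (by rw [h, map_zero]))
      obtain ⟨y, hy⟩ := (hunit _ hx0 (hconst a)).exists_right_inv
      have hdy : D.δ y = 0 := hδinv _ _ (hconst a) hy
      obtain ⟨b, hb⟩ := (hkrange y).mpr hdy
      refine ⟨b, hkinj ?_⟩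
      rw [map_mul, hb, hy, map_one]
  letI : Field k := hfield.toField
  -- basis of S over k and the induced basis of R ⊗[k] S over R
  set B := Module.Basis.ofVectorSpace k S with hB
  set bT := B.baseChange R with hbT
  -- Leibniz rule for δT
  have hL1 : ∀ (r : R) (s : S) (y : R ⊗[k] S),
      δT ((r ⊗ₜ[k] s) * y) = (r ⊗ₜ[k] s) * δT y + δT (r ⊗ₜ[k] s) * y := by
    intro r s y
    induction y using TensorProduct.induction_on with
    | zero => simp [hδT0]
    | tmul r' s' =>
      rw [Algebra.TensorProduct.tmul_mul_tmul, hpure, hpure, hpure, D.δ_mul,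
        TensorProduct.add_tmul, Algebra.TensorProduct.tmul_mul_tmul,
        Algebra.TensorProduct.tmul_mul_tmul]
    | add x₁ x₂ h₁ h₂ =>
      rw [mul_add, hadd, h₁, h₂, hadd]
      ring
  have hLeibniz : ∀ x y : R ⊗[k] S, δT (x * y) = x * δT y + δT x * y := by
    intro x y
    induction x using TensorProduct.induction_on with
    | zero => simp [hδT0]
    | tmul r s => exact hL1 r s y
    | add x₁ x₂ h₁ h₂ =>
      rw [add_mul, hadd, h₁, h₂, hadd]
      ring
  -- δT in coordinates
  have hcoord : ∀ (t : R ⊗[k] S) (i), bT.repr (δT t) i = D.δ (bT.repr t i) := by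
    intro t i
    induction t using TensorProduct.induction_on with
    | zero => simp [hδT0, hδ0]
    | tmul r s =>
      rw [hpure, hbT, Module.Basis.baseChange_repr_tmul, Module.Basis.baseChange_repr_tmul, hδsmulk]
    | add x₁ x₂ h₁ h₂ =>
      rw [hadd, map_add, map_add, Finsupp.add_apply, Finsupp.add_apply, h₁, h₂,
        D.δ_add]
  have hsmulT : ∀ (r : R) (t : R ⊗[k] S), r • t = algebraMap R (R ⊗[k] S) r * t :=
    fun r t => Algebra.smul_def r t
  -- the key "ideal is everything" engine
  have hkey : ∀ (𝔟 : Ideal (R ⊗[k] S)), (∀ t ∈ 𝔟, δT t ∈ 𝔟) →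
      ∀ (F : Finset ↑(Module.Basis.ofVectorSpaceIndex k S)) (j : ↑(Module.Basis.ofVectorSpaceIndex k S)),
      ∀ t ∈ 𝔟, (bT.repr t).support ⊆ F →
      bT.repr t j ≠ 0 →
      ∃ u ∈ 𝔟, (bT.repr u).support ⊆ F ∧ bT.repr u j = 1 := by
    intro 𝔟 hδ𝔟 F j t ht htF htj
    set I : Ideal R :=
      { carrier := {r : R | ∃ u ∈ 𝔟, (bT.repr u).support ⊆ F ∧ bT.repr u j = r}
        add_mem' := by
          rintro a b ⟨u, hu, huF, hua⟩ ⟨v, hv, hvF, hvb⟩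
          refine ⟨u + v, 𝔟.add_mem hu hv, ?_, by
            rw [map_add, Finsupp.add_apply, hua, hvb]⟩
          rw [map_add]
          exact Finset.Subset.trans Finsupp.support_add (Finset.union_subset huF hvF)
        zero_mem' := ⟨0, 𝔟.zero_mem, by simp, by simp⟩
        smul_mem' := by
          rintro r a ⟨u, hu, huF, hua⟩
          refine ⟨r • u, by rw [hsmulT]; exact 𝔟.mul_mem_left _ hu, ?_, ?_⟩
          · rw [map_smul]
            exact Finset.Subset.trans Finsupp.support_smul huF
          · rw [map_smul, Finsupp.smul_apply, hua, smul_eq_mul] } with hI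
    have hIδ : ∀ a ∈ I, D.δ a ∈ I := by
      rintro a ⟨u, hu, huF, hua⟩
      refine ⟨δT u, hδ𝔟 u hu, ?_, by rw [hcoord, hua]⟩
      intro i hi
      apply huF
      rw [Finsupp.mem_support_iff] at hi ⊢
      intro h0
      exact hi (by rw [hcoord, h0, hδ0])
    rcases hsimple I hIδ with h | h
    · exfalso
      have : bT.repr t j ∈ I := ⟨t, ht, htF, rfl⟩
      rw [h] at this
      exact htj this
    · have h1 : (1 : R) ∈ I := by rw [h]; trivial
      exact h1
  -- normalization: every suitable element can be replaced by a δ-constant one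
  have hnorm : ∀ (𝔟 : Ideal (R ⊗[k] S)), (∀ t ∈ 𝔟, δT t ∈ 𝔟) →
      ∀ (n : ℕ) (u : R ⊗[k] S), u ∈ 𝔟 → (bT.repr u).support.card ≤ n →
      ∀ j, bT.repr u j = 1 →
      ∃ v ∈ 𝔟, (bT.repr v).support ⊆ (bT.repr u).support ∧
        bT.repr v j = 1 ∧ δT v = 0 := by
    intro 𝔟 hδ𝔟 n
    induction n with
    | zero =>
      intro u hu hcard j hj
      exfalso
      rw [Nat.le_zero, Finset.card_eq_zero] at hcard
      have h : bT.repr u j ≠ 0 := by rw [hj]; exact one_ne_zero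
      have h2 := Finsupp.mem_support_iff.mpr h
      rw [hcard] at h2
      simp at h2
    | succ n ih =>
      intro u hu hcard j hj
      by_cases h0 : δT u = 0
      · exact ⟨u, hu, Finset.Subset.refl _, hj, h0⟩
      · have hrepr0 : bT.repr (δT u) ≠ 0 := fun h => h0 (by
          have := congrArg bT.repr.symm h
          simpa using this)
        obtain ⟨j', hj'⟩ := Finsupp.ne_iff.mp hrepr0
        rw [Finsupp.coe_zero, Pi.zero_apply] at hj'
        have hjj' : bT.repr (δT u) j = 0 := by rw [hcoord, hj, hδ1]
        have hj'mem : j' ∈ (bT.repr u).support := by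
          rw [Finsupp.mem_support_iff]
          intro h
          exact hj' (by rw [hcoord, h, hδ0])
        -- support of δT u is inside support of u minus j
        have hδsup : (bT.repr (δT u)).support ⊆ (bT.repr u).support.erase j := by
          intro i hi
          rw [Finsupp.mem_support_iff] at hi
          rw [Finset.mem_erase]
          refine ⟨fun h => ?_, Finsupp.mem_support_iff.mpr fun h => ?_⟩
          · rw [h] at hi; exact hi hjj'
          · exact hi (by rw [hcoord, h, hδ0])
        obtain ⟨w, hw, hwF, hwj'⟩ := hkey 𝔟 hδ𝔟 (bT.repr (δT u)).support j'
          (δT u) (hδ𝔟 u hu) (Finset.Subset.refl _) hj'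
        have hwj : bT.repr w j = 0 := by
          by_contra h
          have h1 : j ∈ (bT.repr w).support := Finsupp.mem_support_iff.mpr h
          have h2 := hδsup (hwF h1)
          rw [Finset.mem_erase] at h2
          exact h2.1 rfl
        set u' := u - (bT.repr u j') • w with hu'
        have hu'mem : u' ∈ 𝔟 := 𝔟.sub_mem hu (by rw [hsmulT]; exact 𝔟.mul_mem_left _ hw)
        have hu'j : bT.repr u' j = 1 := by
          rw [hu', map_sub, map_smul, Finsupp.sub_apply, Finsupp.smul_apply, hwj,
            smul_zero, sub_zero, hj]
        have hu'sup : (bT.repr u').support ⊆ (bT.repr u).support.erase j' := by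
          intro i hi
          rw [Finsupp.mem_support_iff] at hi
          rw [Finset.mem_erase]
          constructor
          · intro h
            apply hi
            rw [hu', map_sub, map_smul, Finsupp.sub_apply, Finsupp.smul_apply,
              h, hwj', smul_eq_mul, mul_one, sub_self]
          · rw [Finsupp.mem_support_iff]
            intro h
            apply hi
            rw [hu', map_sub, map_smul, Finsupp.sub_apply, Finsupp.smul_apply, h,
              smul_eq_mul]
            by_cases hiw : bT.repr w i = 0
            · rw [hiw, mul_zero, sub_zero]
            · exfalso
              have h1 : i ∈ (bT.repr w).support := Finsupp.mem_support_iff.mpr hiw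
              have h2 := hδsup (hwF h1)
              rw [Finset.mem_erase, Finsupp.mem_support_iff] at h2
              exact h2.2 h
        have hcard' : (bT.repr u').support.card ≤ n := by
          have h2 := Finset.card_le_card hu'sup
          rw [Finset.card_erase_of_mem hj'mem] at h2
          omega
        obtain ⟨v, hv, hvsup, hvj, hvδ⟩ := ih u' hu'mem hcard' j hu'j
        refine ⟨v, hv, ?_, hvj, hvδ⟩
        refine Finset.Subset.trans hvsup (Finset.Subset.trans hu'sup ?_)
        exact Finset.erase_subset _ _
  -- Part 1
  have hpart1 : ∀ t : R ⊗[k] S, δT t = 0 ↔ t ∈ Set.range ⇑ι := by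
    intro t
    constructor
    · intro ht
      have hcoeff : ∀ i, D.δ (bT.repr t i) = 0 := by
        intro i
        rw [← hcoord, ht, map_zero, Finsupp.coe_zero, Pi.zero_apply]
      choose a ha using fun i => (hkrange (bT.repr t i)).mpr (hcoeff i)
      refine ⟨∑ i ∈ (bT.repr t).support, a i • (B i : S), ?_⟩
      rw [map_sum]
      have heach : ∀ i ∈ (bT.repr t).support,
          ι (a i • (B i : S)) = bT.repr t i • bT i := by
        intro i _
        rw [hι, TensorProduct.tmul_smul, hbT, Module.Basis.baseChange_apply,
          TensorProduct.smul_tmul', TensorProduct.smul_tmul', smul_eq_mul, mul_one,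
          ← Algebra.algebraMap_eq_smul_one, ha]
      rw [Finset.sum_congr rfl heach]
      have h := bT.linearCombination_repr t
      rw [Finsupp.linearCombination_apply, Finsupp.sum] at h
      exact h
    · rintro ⟨s, rfl⟩
      rw [hι, hpure, hδ1, TensorProduct.zero_tmul]
  -- Part 2
  have hpart2 : ∀ 𝔞 : Ideal S, Ideal.comap ι (Ideal.map ι 𝔞) = 𝔞 := by
    intro 𝔞
    refine le_antisymm ?_ (Ideal.le_comap_map)
    intro s hs
    rw [Ideal.mem_comap] at hs
    -- map to R ⊗ (S/𝔞)
    set mkQ := Ideal.Quotient.mkₐ k 𝔞 with hmkQ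
    set g : (R ⊗[k] S) →ₐ[k] (R ⊗[k] (S ⧸ 𝔞)) :=
      Algebra.TensorProduct.map (AlgHom.id k R) mkQ with hg
    have h1 : 𝔞 ≤ Ideal.comap ι (Ideal.comap g.toRingHom ⊥) := by
      intro a ha
      rw [Ideal.mem_comap, Ideal.mem_comap, Ideal.mem_bot]
      show g (ι a) = 0
      rw [hι]
      show g (1 ⊗ₜ[k] a) = 0
      rw [hg, Algebra.TensorProduct.map_tmul]
      have hma : mkQ a = 0 := by
        rw [hmkQ, Ideal.Quotient.mkₐ_eq_mk]
        exact (Ideal.Quotient.eq_zero_iff_mem).mpr ha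
      rw [hma, TensorProduct.tmul_zero]
    have hg0 : g (ι s) = 0 := by
      have h2 := Ideal.map_le_iff_le_comap.mpr h1 hs
      rw [Ideal.mem_comap, Ideal.mem_bot] at h2
      exact h2
    rw [hι] at hg0
    have hgs : (1 : R) ⊗ₜ[k] (mkQ s) = 0 := by
      rw [← hg0, hg, Algebra.TensorProduct.map_tmul, AlgHom.coe_id, id_eq]
    -- retraction R →ₗ[k] k
    have hfinj : LinearMap.ker (LinearMap.toSpanSingleton k R 1) = ⊥ := by
      rw [LinearMap.ker_eq_bot]
      intro a b hab
      simp only [LinearMap.toSpanSingleton_apply] at hab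
      apply hkinj
      rw [Algebra.algebraMap_eq_smul_one, Algebra.algebraMap_eq_smul_one]
      exact hab
    obtain ⟨g1, hg1inv⟩ :=
      (LinearMap.toSpanSingleton k R 1).exists_leftInverse_of_injective hfinj
    have hg11 : g1 1 = 1 := by
      have h3 := congrArg (fun f => f (1 : k)) hg1inv
      simpa [LinearMap.toSpanSingleton_apply] using h3
    set ψ : (R ⊗[k] (S ⧸ 𝔞)) →ₗ[k] (S ⧸ 𝔞) :=
      (TensorProduct.lid k (S ⧸ 𝔞)).toLinearMap ∘ₗ TensorProduct.map g1 LinearMap.id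
      with hψ
    have hψ1 : ∀ q : S ⧸ 𝔞, ψ ((1 : R) ⊗ₜ[k] q) = q := by
      intro q
      rw [hψ]
      simp [hg11]
    have hzero : mkQ s = 0 := by
      rw [← hψ1 (mkQ s), hgs, map_zero]
    rw [hmkQ, Ideal.Quotient.mkₐ_eq_mk] at hzero
    exact (Ideal.Quotient.eq_zero_iff_mem).mp hzero
  -- Part 3
  have hpart3 : ∀ 𝔞 : Ideal S, ∀ t ∈ Ideal.map ι 𝔞, δT t ∈ Ideal.map ι 𝔞 := by
    intro 𝔞 t ht
    have hmap : Ideal.map ι 𝔞 = Ideal.span (⇑ι '' ↑𝔞) := rfl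
    rw [hmap] at ht ⊢
    induction ht using Submodule.span_induction with
    | mem x hx =>
      obtain ⟨a, _, rfl⟩ := hx
      rw [hι, hpure, hδ1, TensorProduct.zero_tmul]
      exact Ideal.zero_mem _
    | zero => rw [hδT0]; exact Ideal.zero_mem _
    | add x y hx hy hx' hy' => rw [hadd]; exact Ideal.add_mem _ hx' hy'
    | smul c x hx hx' =>
      rw [smul_eq_mul, hLeibniz]
      exact Ideal.add_mem _ (Ideal.mul_mem_left _ _ hx')
        (Ideal.mul_mem_left _ (δT c) hx)
  refine ⟨hpart1, hpart2, hpart3, ?_⟩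
  -- Part 4
  intro 𝔟 hδ𝔟
  refine le_antisymm (Ideal.map_comap_le) ?_
  have main : ∀ (n : ℕ) (t : R ⊗[k] S), t ∈ 𝔟 → (bT.repr t).support.card ≤ n →
      t ∈ Ideal.map ι (Ideal.comap ι 𝔟) := by
    intro n
    induction n with
    | zero =>
      intro t ht hcard
      rw [Nat.le_zero, Finset.card_eq_zero, Finsupp.support_eq_empty] at hcard
      have h : t = 0 := by
        have h2 := congrArg bT.repr.symm hcard
        simpa using h2
      rw [h]
      exact Ideal.zero_mem _
    | succ n ih =>
      intro t ht hcard
      by_cases h0 : t = 0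
      · rw [h0]; exact Ideal.zero_mem _
      · have hrepr0 : bT.repr t ≠ 0 := fun h => h0 (by
          have h2 := congrArg bT.repr.symm h
          simpa using h2)
        obtain ⟨j, hj⟩ := Finsupp.ne_iff.mp hrepr0
        rw [Finsupp.coe_zero, Pi.zero_apply] at hj
        obtain ⟨u, hu, huF, huj⟩ := hkey 𝔟 hδ𝔟 (bT.repr t).support j t ht
          (Finset.Subset.refl _) hj
        obtain ⟨v, hv, hvsup, hvj, hvδ⟩ := hnorm 𝔟 hδ𝔟 (bT.repr u).support.card
          u hu (le_refl _) j huj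
        -- v is in the image of ι
        obtain ⟨s, hs⟩ := (hpart1 v).mp hvδ
        have hvM : v ∈ Ideal.map ι (Ideal.comap ι 𝔟) := by
          rw [← hs]
          apply Ideal.mem_map_of_mem
          rw [Ideal.mem_comap, hs]
          exact hv
        set t' := t - (bT.repr t j) • v with ht'
        have ht'mem : t' ∈ 𝔟 := 𝔟.sub_mem ht (by rw [hsmulT]; exact 𝔟.mul_mem_left _ hv)
        have hjmem : j ∈ (bT.repr t).support := Finsupp.mem_support_iff.mpr hj
        have hvsupt : (bT.repr v).support ⊆ (bT.repr t).support :=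
          Finset.Subset.trans hvsup huF
        have ht'sup : (bT.repr t').support ⊆ (bT.repr t).support.erase j := by
          intro i hi
          rw [Finsupp.mem_support_iff] at hi
          rw [Finset.mem_erase]
          constructor
          · intro h
            apply hi
            rw [ht', map_sub, map_smul, Finsupp.sub_apply, Finsupp.smul_apply,
              h, hvj, smul_eq_mul, mul_one, sub_self]
          · rw [Finsupp.mem_support_iff]
            intro h
            apply hi
            rw [ht', map_sub, map_smul, Finsupp.sub_apply, Finsupp.smul_apply, h,
              smul_eq_mul]
            by_cases hiv : bT.repr v i = 0
            · rw [hiv, mul_zero, sub_zero]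
            · exfalso
              have h1 : i ∈ (bT.repr v).support := Finsupp.mem_support_iff.mpr hiv
              have h2 := hvsupt h1
              rw [Finsupp.mem_support_iff] at h2
              exact h2 h
        have hcard' : (bT.repr t').support.card ≤ n := by
          have h2 := Finset.card_le_card ht'sup
          rw [Finset.card_erase_of_mem hjmem] at h2
          omega
        have ht'M := ih t' ht'mem hcard'
        have hsum : t = t' + (bT.repr t j) • v := by rw [ht']; abel
        rw [hsum]
        exact Ideal.add_mem _ ht'M (by rw [hsmulT]; exact Ideal.mul_mem_left _ _ hvM)
  intro t ht
  exact main (bT.repr t).support.card t ht (le_refl _)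
end

section
/- Let k be a σ-field and R a k-σ-algebra which is a σ-domain, so that σ extends naturally to the quotient field Quot(R). If R is σ-separable (respectively perfectly σ-separable, respectively σ-regular) over k, then Quot(R) is σ-separable (respectively perfectly σ-separable, respectively σ-regular) over k. -/
open scoped TensorProduct

universe u

lemma isUnit_iter {A : Type*} [CommRing A] (τ : A →+* A) {u : A} (h : IsUnit u) :
    ∀ n, IsUnit ((⇑τ)^[n] u) := by
  intro n
  induction n with
  | zero => exact h
  | succ n ih => rw [Function.iterate_succ_apply']; exact ih.map τ

lemma stmt17_aux {k R F : Type u} [Field k] [CommRing R] [Algebra k R] [IsDomain R]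
    [Field F] [Algebra R F] [IsFractionRing R F] [Algebra k F]
    (σR : R →+* R) (σF : F →+* F)
    (hσF : ∀ r : R, σF (algebraMap R F r) = algebraMap R F (σR r))
    (halg : ∀ c : k, algebraMap k F c = algebraMap R F (algebraMap k R c))
    (k' : Type u) [Field k'] [Algebra k k'] (σ' : k' →+* k')
    (τF : (F ⊗[k] k') →+* (F ⊗[k] k'))
    (hτF : ∀ (a : F) (c : k'), τF (a ⊗ₜ c) = σF a ⊗ₜ σ' c) :
    ∃ (φ : (R ⊗[k] k') →+* (F ⊗[k] k'))
      (τR : (R ⊗[k] k') →+* (R ⊗[k] k')),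
      Function.Injective ⇑φ ∧
      (∀ (a : R) (c : k'), τR (a ⊗ₜ c) = σR a ⊗ₜ σ' c) ∧
      (∀ (n : ℕ) (x : R ⊗[k] k'), φ ((⇑τR)^[n] x) = (⇑τF)^[n] (φ x)) ∧
      (∀ z : F ⊗[k] k', ∃ (x : R ⊗[k] k') (u : F ⊗[k] k'),
        IsUnit u ∧ z * u = φ x) := by
  let ψ : R →ₐ[k] F :=
    { toRingHom := algebraMap R F, commutes' := fun c => (halg c).symm }
  have hψc : ⇑ψ = ⇑(algebraMap R F) := rfl
  have hψ : Function.Injective ⇑ψ := IsFractionRing.injective R F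
  let Φ : (R ⊗[k] k') →ₐ[k] (F ⊗[k] k') := Algebra.TensorProduct.map ψ (AlgHom.id k k')
  have hΦt : ∀ (a : R) (c : k'), Φ (a ⊗ₜ c) = (ψ a) ⊗ₜ c := fun a c => rfl
  have hΦinj : Function.Injective ⇑Φ := by
    have h1 : Φ.toLinearMap = LinearMap.rTensor k' ψ.toLinearMap :=
      TensorProduct.ext' fun a c => rfl
    have h2 : ⇑Φ = ⇑(LinearMap.rTensor k' ψ.toLinearMap) := by rw [← h1]; rfl
    rw [h2]
    exact Module.Flat.rTensor_preserves_injective_linearMap ψ.toLinearMap hψ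
  have hσψ : ∀ a : R, σF (ψ a) = ψ (σR a) := fun a => hσF a
  have hmem : ∀ y : R ⊗[k] k', τF (Φ y) ∈ Φ.range := by
    intro y
    induction y using TensorProduct.induction_on with
    | zero => simp only [map_zero]; exact Subalgebra.zero_mem _
    | tmul a c =>
        rw [hΦt, hτF, hσψ]
        exact ⟨σR a ⊗ₜ σ' c, rfl⟩
    | add x y hx hy => rw [map_add, map_add]; exact add_mem hx hy
  let S := Φ.range
  let τS : S →+* S := RingHom.codRestrict (τF.comp (SubringClass.subtype S)) S
    (fun x => by obtain ⟨y, hy⟩ := x.2; show τF (x : F ⊗[k] k') ∈ Φ.range; rw [← hy]; exact hmem y)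
  let e := AlgEquiv.ofInjective Φ hΦinj
  let τR : (R ⊗[k] k') →+* (R ⊗[k] k') :=
    ((e.symm : S →ₐ[k] (R ⊗[k] k')) : S →+* (R ⊗[k] k')).comp
      (τS.comp ((e : (R ⊗[k] k') →ₐ[k] S) : (R ⊗[k] k') →+* S))
  have hecoe : ∀ x, ((e x : S) : F ⊗[k] k') = Φ x := fun x =>
    AlgEquiv.ofInjective_apply Φ hΦinj x
  have hcomm : ∀ x, Φ (τR x) = τF (Φ x) := by
    intro x
    show Φ (e.symm (τS (e x))) = τF (Φ x)
    rw [← hecoe, e.apply_symm_apply]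
    show (τF ((e x : S) : F ⊗[k] k')) = τF (Φ x)
    rw [hecoe]
  have hτR : ∀ (a : R) (c : k'), τR (a ⊗ₜ c) = σR a ⊗ₜ σ' c := by
    intro a c
    apply hΦinj
    rw [hcomm, hΦt, hτF, hσψ, hΦt]
  have hcommn : ∀ (n : ℕ) (x : R ⊗[k] k'), Φ ((⇑τR)^[n] x) = (⇑τF)^[n] (Φ x) := by
    intro n
    induction n with
    | zero => intro x; rfl
    | succ n ih =>
        intro x
        rw [Function.iterate_succ_apply', Function.iterate_succ_apply', hcomm, ih]
  have hclear : ∀ z : F ⊗[k] k', ∃ (x : R ⊗[k] k') (s : R), s ≠ 0 ∧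
      z * ((algebraMap R F s) ⊗ₜ (1 : k')) = Φ x := by
    intro z
    induction z using TensorProduct.induction_on with
    | zero => exact ⟨0, 1, one_ne_zero, by simp⟩
    | tmul f c =>
        obtain ⟨⟨r, s⟩, hs⟩ := IsLocalization.surj (nonZeroDivisors R) f
        refine ⟨r ⊗ₜ c, s, nonZeroDivisors.coe_ne_zero s, ?_⟩
        rw [hΦt, Algebra.TensorProduct.tmul_mul_tmul, mul_one, hs]
        rfl
    | add z w hz hw =>
        obtain ⟨x, s, hs, hx⟩ := hz
        obtain ⟨y, t, ht, hy⟩ := hw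
        refine ⟨x * (t ⊗ₜ 1) + y * (s ⊗ₜ 1), s * t, mul_ne_zero hs ht, ?_⟩
        have h1 : Φ (t ⊗ₜ (1 : k')) = (algebraMap R F t) ⊗ₜ (1 : k') := hΦt t 1
        have h2 : Φ (s ⊗ₜ (1 : k')) = (algebraMap R F s) ⊗ₜ (1 : k') := hΦt s 1
        have key : (algebraMap R F (s * t)) ⊗ₜ[k] (1 : k') =
            ((algebraMap R F s) ⊗ₜ[k] (1 : k')) * ((algebraMap R F t) ⊗ₜ[k] (1 : k')) := by
          rw [Algebra.TensorProduct.tmul_mul_tmul, mul_one, map_mul]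
        rw [key, map_add, map_mul, map_mul, h1, h2, ← hx, ← hy]
        ring
  refine ⟨(Φ : (R ⊗[k] k') →+* (F ⊗[k] k')), τR, hΦinj, hτR, hcommn, ?_⟩
  intro z
  obtain ⟨x, s, hs, hx⟩ := hclear z
  refine ⟨x, (algebraMap R F s) ⊗ₜ 1, ?_, hx⟩
  have hsF : algebraMap R F s ≠ 0 := fun h => hs ((map_eq_zero_iff _ hψ).mp h)
  refine IsUnit.of_mul_eq_one ((algebraMap R F s)⁻¹ ⊗ₜ 1) ?_
  rw [Algebra.TensorProduct.tmul_mul_tmul, mul_one, mul_inv_cancel₀ hsF]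
  rfl

lemma isDomain_of_clear {A B : Type u} [CommRing A] [CommRing B] [IsDomain A]
    (φ : A →+* B) (hφinj : Function.Injective ⇑φ)
    (hcl : ∀ z : B, ∃ (x : A) (u : B), IsUnit u ∧ z * u = φ x) : IsDomain B := by
  haveI : Nontrivial B :=
    ⟨0, 1, fun h01 => zero_ne_one
      (hφinj (show φ 0 = φ 1 by rw [map_zero, map_one]; exact h01))⟩
  haveI : NoZeroDivisors B := by
    refine ⟨fun {a b} hab => ?_⟩
    obtain ⟨x, u, hu, hx⟩ := hcl a
    obtain ⟨y, v, hv, hy⟩ := hcl b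
    have hkey : φ (x * y) = a * b * (u * v) := by rw [map_mul, ← hx, ← hy]; ring
    rw [hab, zero_mul] at hkey
    have hxy : x * y = 0 := hφinj (by rw [hkey, map_zero])
    rcases mul_eq_zero.mp hxy with h | h
    · left
      have h4 : a * u = 0 := by rw [hx, h, map_zero]
      exact (hu.mul_left_eq_zero).mp h4
    · right
      have h4 : b * v = 0 := by rw [hy, h, map_zero]
      exact (hv.mul_left_eq_zero).mp h4
  exact NoZeroDivisors.to_isDomain B

/-- if a `k`-σ-algebra `R` which is a σ-domain is σ-separable
(resp. perfectly σ-separable, resp. σ-regular) over `k`, then so is its quotient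
field. -/
theorem stmt_17 {k R : Type u} [Field k] [CommRing R] [Algebra k R] [IsDomain R]
    (σk : k →+* k) (σR : R →+* R)
    (hcompat : ∀ c : k, σR (algebraMap k R c) = algebraMap k R (σk c))
    (hinj : Function.Injective ⇑σR)
    (σF : FractionRing R →+* FractionRing R)
    (hσF : ∀ r : R, σF (algebraMap R (FractionRing R) r) =
      algebraMap R (FractionRing R) (σR r))
    [Algebra k (FractionRing R)]
    (halg : ∀ c : k, algebraMap k (FractionRing R) c =
      algebraMap R (FractionRing R) (algebraMap k R c)) :
    (SigmaSeparable k σk R σR → SigmaSeparable k σk (FractionRing R) σF) ∧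
    (SigmaPerfSeparable k σk R σR → SigmaPerfSeparable k σk (FractionRing R) σF) ∧
    (SigmaRegular k σk R σR → SigmaRegular k σk (FractionRing R) σF) := by
  refine ⟨?_, ?_, ?_⟩
  · -- σ-separable
    intro hR k' _ _ σ' hσ' τF hτF
    obtain ⟨φ, τR, hφinj, hτR, hcommn, hcl⟩ := stmt17_aux σR σF hσF halg k' σ' τF hτF
    have hτRinj := hR k' σ' hσ' τR hτR
    have hker : ∀ z, τF z = 0 → z = 0 := by
      intro z hz
      obtain ⟨x, u, hu, hzu⟩ := hcl z
      have h1 : φ (τR x) = 0 := by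
        have h := hcommn 1 x
        simp only [Function.iterate_one] at h
        rw [h, ← hzu, map_mul, hz, zero_mul]
      have h2 : τR x = 0 := hφinj (by rw [h1, map_zero])
      have h3 : x = 0 := hτRinj (by rw [h2, map_zero])
      have h4 : z * u = 0 := by rw [hzu, h3, map_zero]
      exact (hu.mul_left_eq_zero).mp h4
    intro a b hab
    have : τF (a - b) = 0 := by rw [map_sub, hab, sub_self]
    exact sub_eq_zero.mp (hker _ this)
  · -- perfectly σ-separable
    intro hR k' _ _ σ' hσ' τF hτF
    obtain ⟨φ, τR, hφinj, hτR, hcommn, hcl⟩ := stmt17_aux σR σF hσF halg k' σ' τF hτF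
    have hperf := hR k' σ' hσ' τR hτR
    intro f m α hprod
    obtain ⟨x, u, hu, hfu⟩ := hcl f
    have key : φ (∏ i, (⇑τR)^[α i] x) =
        (∏ i, (⇑τF)^[α i] f) * (∏ i, (⇑τF)^[α i] u) := by
      rw [map_prod, ← Finset.prod_mul_distrib]
      refine Finset.prod_congr rfl fun i _ => ?_
      rw [hcommn (α i) x, ← hfu, iterate_map_mul τF]
    rw [hprod, zero_mul] at key
    have hx0 : (∏ i, (⇑τR)^[α i] x) = 0 := hφinj (by rw [key, map_zero])
    have hx : x = 0 := hperf x m α hx0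
    have h4 : f * u = 0 := by rw [hfu, hx, map_zero]
    exact (hu.mul_left_eq_zero).mp h4
  · -- σ-regular
    intro hR k' _ _ σ' hσ' τF hτF
    obtain ⟨φ, τR, hφinj, hτR, hcommn, hcl⟩ := stmt17_aux σR σF hσF halg k' σ' τF hτF
    obtain ⟨hdom, hτRinj⟩ := hR k' σ' hσ' τR hτR
    haveI := hdom
    constructor
    · exact isDomain_of_clear φ hφinj hcl
    · have hker : ∀ z, τF z = 0 → z = 0 := by
        intro z hz
        obtain ⟨x, u, hu, hzu⟩ := hcl z
        have h1 : φ (τR x) = 0 := by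
          have h := hcommn 1 x
          simp only [Function.iterate_one] at h
          rw [h, ← hzu, map_mul, hz, zero_mul]
        have h2 : τR x = 0 := hφinj (by rw [h1, map_zero])
        have h3 : x = 0 := hτRinj (by rw [h2, map_zero])
        have h4 : z * u = 0 := by rw [hzu, h3, map_zero]
        exact (hu.mul_left_eq_zero).mp h4
      intro a b hab
      have : τF (a - b) = 0 := by rw [map_sub, hab, sub_self]
      exact sub_eq_zero.mp (hker _ this)
end
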